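/- (Discrete gradient structure / positive definiteness) Fix $n \geq 2$, let $\sigma_{\min} \in [0,2)$, and let $\{\chi_{n-j}^{(n)}\}_{j=1}^n$ be positive kernels (for each level $m \leq n$). Define auxiliary kernels $\mathbf{a}_0^{(m)} = (2-\sigma_{\min})\chi_0^{(m)}$ and $\mathbf{a}_{m-j}^{(m)} = \chi_{m-j}^{(m)}$ for $1 \leq j \leq m-1$. Assume (1) $\mathbf{a}_{m-j-1}^{(m)} \geq \mathbf{a}_{m-j}^{(m)} > 0$ for $1 \leq j \leq m-1$; (2) $\mathbf{a}_{m-j-1}^{(m-1)} \geq \mathbf{a}_{m-j}^{(m)}$ for $1 \leq j \leq m-1$; (3) $\mathbf{a}_{m-j-2}^{(m-1)} - \mathbf{a}_{m-j-1}^{(m-1)} \geq \mathbf{a}_{m-j-1}^{(m)} - \mathbf{a}_{m-j}^{(m)}$ for $1 \leq j \leq m-2$. Define $Y[\vec{\phi}_m] = \sum_{j=1}^{m-1}(\mathbf{a}_{m-j-1}^{(m)} - \mathbf{a}_{m-j}^{(m)})(\sum_{\ell=j+1}^m \phi_\ell)^2 + \mathbf{a}_{m-1}^{(m)}(\sum_{\ell=1}^m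 \phi_\ell)^2$. Then for any real sequence $\{\phi_k\}_{k=1}^n$: $2\sum_{k=1}^n \phi_k \sum_{j=1}^k \chi_{k-j}^{(k)}\phi_j \geq Y[\vec{\phi}_n] + \sigma_{\min}\sum_{k=1}^n \chi_0^{(k)}\phi_k^2$. -/

import Mathlib

open Finset

/-- The auxiliary kernels: `auxA σ χ m j = 𝐚_j^{(m)}`, equal to `(2-σ)χ_0^{(m)}` for `j = 0`
and to `χ_j^{(m)}` for `j ≥ 1`. -/
noncomputable def auxA (σ : ℝ) (χ : ℕ → ℕ → ℝ) (m j : ℕ) : ℝ :=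
  if j = 0 then (2 - σ) * χ m 0 else χ m j

/-- The quadratic functional `Y[φ⃗_m]`. -/
noncomputable def Yfun (σ : ℝ) (χ : ℕ → ℕ → ℝ) (φ : ℕ → ℝ) (m : ℕ) : ℝ :=
  ∑ j ∈ Finset.Icc 1 (m-1),
      (auxA σ χ m (m-j-1) - auxA σ χ m (m-j)) * (∑ l ∈ Finset.Icc (j+1) m, φ l)^2
    + auxA σ χ m (m-1) * (∑ l ∈ Finset.Icc 1 m, φ l)^2

/-! For any kernel `a`, summation by parts turns the form
`∑_{j<m} (a_{m-j-1} - a_{m-j}) (∑_{l>j} φ_l)² + a_{m-1} (∑_l φ_l)²` into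
`∑_{j≤m} a_{m-j} φ_j (φ_j + 2 ∑_{l>j} φ_l)`, which is linear in `a`. In that shape one reads off
that the `m`-th summand of the left-hand side, `2 φ_m ∑_j χ^{(m)}_{m-j} φ_j`, equals
`Y[φ⃗_m] - Y[φ⃗_{m-1}] + σ χ^{(m)}_0 φ_m² + Y_R`, where `Y_R` is the same form on `φ⃗_{m-1}` with
the kernel `k ↦ 𝐚^{(m-1)}_k - 𝐚^{(m)}_{k+1}`. Conditions (2) and (3) say exactly that this kernel is
nonincreasing and nonnegative at its last index, so `Y_R` is a nonnegative combination of squares,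
and summing over `m` gives the inequality. -/

noncomputable def kernelForm (a φ : ℕ → ℝ) (m : ℕ) : ℝ :=
  ∑ j ∈ Icc 1 (m-1), (a (m-j-1) - a (m-j)) * (∑ l ∈ Icc (j+1) m, φ l)^2
    + a (m-1) * (∑ l ∈ Icc 1 m, φ l)^2

theorem sum_Icc_eq_add_sum_Icc_succ (φ : ℕ → ℝ) {j n : ℕ} (hjn : j ≤ n) :
    ∑ l ∈ Icc j n, φ l = φ j + ∑ l ∈ Icc (j+1) n, φ l := by
  rw [Icc_eq_cons_Ioc hjn, sum_cons, Icc_add_one_left_eq_Ioc]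

theorem sum_Icc_sub_mul_add_eq (a S : ℕ → ℝ) (p : ℕ) :
    ∑ j ∈ Icc 1 p, (a (p-j) - a (p+1-j)) * S j + a p * S 0
      = ∑ j ∈ Icc 1 (p+1), a (p+1-j) * (S (j-1) - S j) + a 0 * S (p+1) := by
  induction p generalizing a with
  | zero =>
    simp only [Order.lt_one_iff, Icc_eq_empty_of_lt, zero_tsub, zero_add, sum_empty, Icc_self,
      sum_singleton, tsub_self]
    ring
  | succ p ih =>
    have shift : ∀ j ∈ Icc 1 p, (a (p+1-j) - a (p+1+1-j)) * S j
        = (a (p-j+1) - a (p+1-j+1)) * S j := by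
      intro j hj
      rw [mem_Icc] at hj
      congr 3 <;> omega
    have shift' : ∀ j ∈ Icc 1 (p+1), a (p+1+1-j) * (S (j-1) - S j)
        = a (p+1-j+1) * (S (j-1) - S j) := by
      intro j hj
      rw [mem_Icc] at hj
      congr 2; omega
    rw [sum_Icc_succ_top (by omega), sum_Icc_succ_top (by omega), sum_congr rfl shift,
      sum_congr rfl shift']
    have := ih (fun k => a (k+1))
    simp only [Nat.sub_self, add_tsub_cancel_left, add_tsub_cancel_right] at this ⊢
    linear_combination this

theorem kernelForm_eq_sum (a φ : ℕ → ℝ) (m : ℕ) :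
    kernelForm a φ m = ∑ j ∈ Icc 1 m, a (m-j) * (φ j * (φ j + 2 * ∑ l ∈ Icc (j+1) m, φ l)) := by
  rcases m with _ | p
  · simp [kernelForm]
  have abel := sum_Icc_sub_mul_add_eq a (fun j => (∑ l ∈ Icc (j+1) (p+1), φ l)^2) p
  have hlast : Icc (p+1+1) (p+1) = ∅ := Icc_eq_empty (by omega)
  have hidx : ∀ j, p+1-j-1 = p-j := fun j => by omega
  simp only [zero_add, hlast, sum_empty, zero_pow two_ne_zero, mul_zero, add_zero] at abel
  simp only [kernelForm, add_tsub_cancel_right, hidx, abel]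
  refine sum_congr rfl fun j hj => ?_
  rw [mem_Icc] at hj
  rw [Nat.sub_add_cancel hj.1, sum_Icc_eq_add_sum_Icc_succ φ hj.2]
  ring

theorem kernelForm_succ (a φ : ℕ → ℝ) (m : ℕ) :
    kernelForm a φ (m+1) = kernelForm (fun k => a (k+1)) φ m
      + φ (m+1) * (2 * ∑ j ∈ Icc 1 m, a (m+1-j) * φ j + a 0 * φ (m+1)) := by
  have hlast : Icc (m+1+1) (m+1) = ∅ := Icc_eq_empty (by omega)
  rw [kernelForm_eq_sum, kernelForm_eq_sum, sum_Icc_succ_top (by omega), Nat.sub_self, hlast,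
    sum_empty]
  have hterm : ∀ j ∈ Icc 1 m,
      a (m+1-j) * (φ j * (φ j + 2 * ∑ l ∈ Icc (j+1) (m+1), φ l))
        = a (m-j+1) * (φ j * (φ j + 2 * ∑ l ∈ Icc (j+1) m, φ l))
          + φ (m+1) * (2 * (a (m+1-j) * φ j)) := by
    intro j hj
    rw [mem_Icc] at hj
    rw [sum_Icc_succ_top (by omega), show m+1-j = m-j+1 by omega]
    ring
  rw [sum_congr rfl hterm, sum_add_distrib, ← mul_sum, ← mul_sum]
  ring

theorem kernelForm_sub (a b φ : ℕ → ℝ) (m : ℕ) :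
    kernelForm (a - b) φ m = kernelForm a φ m - kernelForm b φ m := by
  simp only [kernelForm_eq_sum, ← sum_sub_distrib, Pi.sub_apply, sub_mul]

theorem kernelForm_nonneg (a φ : ℕ → ℝ) (m : ℕ)
    (hanti : ∀ j ∈ Icc 1 (m-1), a (m-j) ≤ a (m-j-1)) (hlast : 0 ≤ a (m-1)) :
    0 ≤ kernelForm a φ m :=
  add_nonneg (sum_nonneg fun j hj => mul_nonneg (sub_nonneg.2 (hanti j hj)) (sq_nonneg _))
    (mul_nonneg hlast (sq_nonneg _))

/-- `Y_R[φ⃗_{m+1}]` is `kernelForm (remainderKernel σ χ m) φ m`. -/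
noncomputable def remainderKernel (σ : ℝ) (χ : ℕ → ℕ → ℝ) (m : ℕ) : ℕ → ℝ :=
  auxA σ χ m - fun k => auxA σ χ (m+1) (k+1)

theorem two_mul_step_eq (σ : ℝ) (χ : ℕ → ℕ → ℝ) (φ : ℕ → ℝ) (m : ℕ) :
    2 * (φ (m+1) * ∑ j ∈ Icc 1 (m+1), χ (m+1) (m+1-j) * φ j)
      = Yfun σ χ φ (m+1) - Yfun σ χ φ m + σ * (χ (m+1) 0 * φ (m+1)^2)
        + kernelForm (remainderKernel σ χ m) φ m := by
  have hY (k : ℕ) : Yfun σ χ φ k = kernelForm (auxA σ χ k) φ k := rfl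
  have hχ : ∀ j ∈ Icc 1 m, χ (m+1) (m+1-j) * φ j = auxA σ χ (m+1) (m+1-j) * φ j := by
    intro j hj
    rw [mem_Icc] at hj
    rw [auxA, if_neg (by omega)]
  have ha₀ : auxA σ χ (m+1) 0 = (2 - σ) * χ (m+1) 0 := if_pos rfl
  rw [hY, hY, kernelForm_succ, remainderKernel, kernelForm_sub, sum_Icc_succ_top (by omega),
    Nat.sub_self, sum_congr rfl hχ, ha₀]
  ring

theorem remainderKernel_nonneg (σ : ℝ) (χ : ℕ → ℕ → ℝ) (φ : ℕ → ℝ) (m : ℕ)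
    (h2 : 1 ≤ m → auxA σ χ m (m-1) ≥ auxA σ χ (m+1) m)
    (h3 : ∀ j ∈ Icc 1 (m-1), auxA σ χ m (m+1-j-2) - auxA σ χ m (m+1-j-1) ≥
      auxA σ χ (m+1) (m+1-j-1) - auxA σ χ (m+1) (m+1-j)) :
    0 ≤ kernelForm (remainderKernel σ χ m) φ m := by
  rcases m with _ | m
  · simp [kernelForm]
  apply kernelForm_nonneg
  · intro j hj
    have h := h3 j hj
    rw [mem_Icc] at hj
    simp only [remainderKernel, Pi.sub_apply]
    rw [show m+1+1-j-2 = m+1-j-1 by omega, show m+1+1-j-1 = m+1-j by omega] at h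
    rw [show m+1-j-1+1 = m+1-j by omega, show m+1-j+1 = m+1+1-j by omega]
    linarith
  · have h := h2 (by omega)
    simp only [remainderKernel, Pi.sub_apply, add_tsub_cancel_right] at h ⊢
    linarith

theorem stmt_17_general (n : ℕ) (σ : ℝ)
    (χ : ℕ → ℕ → ℝ)
    (h2 : ∀ m, 2 ≤ m → m ≤ n → ∀ j, 1 ≤ j → j ≤ m - 1 →
      auxA σ χ (m-1) (m-j-1) ≥ auxA σ χ m (m-j))
    (h3 : ∀ m, 2 ≤ m → m ≤ n → ∀ j, 1 ≤ j → j ≤ m - 2 →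
      auxA σ χ (m-1) (m-j-2) - auxA σ χ (m-1) (m-j-1) ≥
        auxA σ χ m (m-j-1) - auxA σ χ m (m-j)) :
    ∀ φ : ℕ → ℝ,
      2 * ∑ k ∈ Finset.Icc 1 n, φ k * ∑ j ∈ Finset.Icc 1 k, χ k (k-j) * φ j ≥
        Yfun σ χ φ n + σ * ∑ k ∈ Finset.Icc 1 n, χ k 0 * (φ k)^2 := by
  intro φ
  suffices ∀ N ≤ n, 2 * ∑ k ∈ Icc 1 N, φ k * ∑ j ∈ Icc 1 k, χ k (k-j) * φ j ≥
      Yfun σ χ φ N + σ * ∑ k ∈ Icc 1 N, χ k 0 * (φ k)^2 from this n le_rfl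
  intro N hN
  induction N with
  | zero => simp [Yfun]
  | succ m ih =>
    have hrem := remainderKernel_nonneg σ χ φ m
      (fun hm => by
        simpa only [Nat.add_sub_cancel] using h2 (m+1) (by omega) hN 1 le_rfl (by omega))
      (fun j hj => by
        rw [mem_Icc] at hj
        simpa only [Nat.add_sub_cancel] using h3 (m+1) (by omega) hN j hj.1 (by omega))
    rw [sum_Icc_succ_top (by omega) (fun k => φ k * ∑ j ∈ Icc 1 k, χ k (k-j) * φ j),
      sum_Icc_succ_top (by omega) (fun k => χ k 0 * φ k ^ 2)]
    linarith [ih (by omega), two_mul_step_eq σ χ φ m]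

theorem stmt_17 (n : ℕ) (hn : 2 ≤ n) (σ : ℝ) (hσ : σ ∈ Set.Ico (0:ℝ) 2)
    (χ : ℕ → ℕ → ℝ)
    (hχpos : ∀ m, 1 ≤ m → m ≤ n → ∀ j, j ≤ m - 1 → 0 < χ m j)
    (h1 : ∀ m, 1 ≤ m → m ≤ n → ∀ j, 1 ≤ j → j ≤ m - 1 →
      auxA σ χ m (m-j-1) ≥ auxA σ χ m (m-j) ∧ 0 < auxA σ χ m (m-j))
    (h2 : ∀ m, 2 ≤ m → m ≤ n → ∀ j, 1 ≤ j → j ≤ m - 1 →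
      auxA σ χ (m-1) (m-j-1) ≥ auxA σ χ m (m-j))
    (h3 : ∀ m, 2 ≤ m → m ≤ n → ∀ j, 1 ≤ j → j ≤ m - 2 →
      auxA σ χ (m-1) (m-j-2) - auxA σ χ (m-1) (m-j-1) ≥
        auxA σ χ m (m-j-1) - auxA σ χ m (m-j)) :
    ∀ φ : ℕ → ℝ,
      2 * ∑ k ∈ Finset.Icc 1 n, φ k * ∑ j ∈ Finset.Icc 1 k, χ k (k-j) * φ j ≥
        Yfun σ χ φ n + σ * ∑ k ∈ Finset.Icc 1 n, χ k 0 * (φ k)^2 :=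
  stmt_17_general n σ χ h2 h3
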